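/- Orthogonality pricing formula: Let τ be a 𝔾 stopping time with intensity λ (i.e. M_t = 1_{t≥τ} − ∫₀^{t∧τ} λ_s ds is a 𝔾-martingale, λ bounded). Let X be a bounded random variable such that the martingale Z_t = E[X·exp(−∫₀^T λ_s ds) | 𝒢_t] is strongly orthogonal (in the L² sense) to M. Then for all t ≤ T: E[X·1_{τ>T} | 𝒢_t] = 1_{τ>t} · E[X·exp(−∫_t^T λ_s ds) | 𝒢_t]. -/

import Mathlib

open MeasureTheory Real Set Filter

/-!
Write `Λ_u = ∫₀ᵘ λ` and `L_u = 1_{τ>u} e^{Λ_u}`. Since `X 1_{τ>T} = L_T · X e^{-Λ_T}` and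
`1_{τ>t} X e^{-∫_t^T λ} = L_t · X e^{-Λ_T}`, the formula says exactly that `Z L` is a martingale
on `[t, T]`, where `Z_u = E[X e^{-Λ_T} | 𝒢_u]`.

Formally `dL = -L dM`, so this is the product rule plus strong orthogonality. We avoid stochastic
integrals by discretising: on `[a, b]`,
`Z_b L_b - Z_a L_a = Z_b (L_b - L_a + L_a (M_b - M_a)) + L_a (Z_b - Z_a - Z_b (M_b - M_a))`.
The second term has zero conditional expectation given `𝒢_a` because `Z` and `Z M` are
martingales. The first is bounded by `O((b - a)²)` away from the default, and by `O(b - a)` on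
`{a < τ ≤ b}`, whose probabilities add up to at most one. Over a partition of `[t, T]` into `N`
pieces the total `L¹` error is therefore `O(1/N)`.
-/

lemma le_zero_of_subadditive_of_le_mul {φ : ℝ → ℝ → ℝ} {g : ℝ → ℝ} {K t T : ℝ} (htT : t ≤ T)
    (hsub : ∀ a b c, t ≤ a → a ≤ b → b ≤ c → c ≤ T → φ a c ≤ φ a b + φ b c)
    (hloc : ∀ a b, t ≤ a → a ≤ b → b ≤ T → φ a b ≤ (b - a) * (K * (b - a) + (g b - g a))) :
    φ t T ≤ 0 := by
  set c := (T - t) * (K * (T - t) + (g T - g t))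
  have hbound : ∀ N : ℕ, φ t T ≤ c * (1 / ((N : ℝ) + 1)) := by
    intro N
    set δ := (T - t) / ((N : ℝ) + 1)
    have hδ : 0 ≤ δ := div_nonneg (sub_nonneg.2 htT) (by positivity)
    have hend : t + ((N : ℝ) + 1) * δ = T := by simp only [δ]; field_simp; ring
    have hpartial : ∀ k : ℕ, k ≤ N + 1 →
        φ t (t + k * δ) ≤ δ * (K * δ * k + (g (t + k * δ) - g t)) := by
      intro k hk
      induction k with
      | zero => simpa using hloc t t le_rfl le_rfl htT
      | succ k ih =>
        have htk : t ≤ t + k * δ := le_add_of_nonneg_right (by positivity)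
        have hkT : t + (k + 1 : ℕ) * δ ≤ T := by
          rw [← hend]; gcongr; exact_mod_cast hk
        have hstep : t + k * δ ≤ t + (k + 1 : ℕ) * δ := by push_cast; linarith
        have hloc_k := hloc _ _ htk hstep hkT
        rw [show t + (k + 1 : ℕ) * δ - (t + k * δ) = δ by push_cast; ring] at hloc_k
        have := hsub t _ _ le_rfl htk hstep hkT
        have := ih (by omega)
        push_cast at *
        nlinarith
    calc φ t T ≤ δ * (K * δ * (N + 1) + (g T - g t)) := by
          simpa [hend] using hpartial (N + 1) le_rfl
      _ = c * (1 / ((N : ℝ) + 1)) := by simp only [c, δ]; field_simp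
  have hlim := tendsto_one_div_add_atTop_nhds_zero_nat.const_mul c
  rw [mul_zero] at hlim
  exact ge_of_tendsto' hlim hbound

lemma abs_exp_add_sub_exp_sub_mul_le {x d : ℝ} (hd : 0 ≤ d) :
    |exp (x + d) - exp x - exp x * d| ≤ d ^ 2 * exp (x + d) := by
  have heq : exp (x + d) - exp x - exp x * d = exp x * (exp d - 1 - d) := by rw [exp_add]; ring
  have hlow : 0 ≤ exp d - 1 - d := by linarith [add_one_le_exp d]
  have hup : exp d - 1 - d ≤ d ^ 2 * exp d := by
    have hexp : exp (-d) * exp d = 1 := by rw [← exp_add]; simp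
    nlinarith [exp_pos d, add_one_le_exp (-d), mul_le_mul_of_nonneg_left (add_one_le_exp (-d))
      (mul_nonneg hd (exp_pos d).le)]
  rw [heq, abs_of_nonneg (mul_nonneg (exp_pos x).le hlow), exp_add]
  nlinarith [exp_pos x]

lemma intervalIntegral_le_mul_sub {f : ℝ → ℝ} {C a b : ℝ} (hab : a ≤ b) (hf0 : ∀ s, 0 ≤ f s)
    (hfC : ∀ s, f s ≤ C) : ∫ s in a..b, f s ≤ C * (b - a) := by
  have h := intervalIntegral.norm_integral_le_of_norm_le_const (a := a) (b := b)
    fun s _ => (norm_of_nonneg (hf0 s)).trans_le (hfC s)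
  rw [abs_of_nonneg (sub_nonneg.2 hab)] at h
  exact (le_abs_self _).trans h

lemma exp_neg_intervalIntegral_eq {f : ℝ → ℝ} {a b c : ℝ} (hab : IntervalIntegrable f volume a b)
    (hbc : IntervalIntegrable f volume b c) :
    exp (-∫ s in b..c, f s) = exp (∫ s in a..b, f s) * exp (-∫ s in a..c, f s) := by
  rw [← intervalIntegral.integral_add_adjacent_intervals hab hbc, neg_add, exp_add,
    ← mul_assoc, ← exp_add, add_neg_cancel, exp_zero, one_mul]

section

variable {Ω : Type*} {m0 : MeasurableSpace Ω} {μ : Measure Ω}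

lemma condExp_ae_eq_of_integral_abs_sub_le {m : MeasurableSpace Ω} {V : ℝ → Ω → ℝ}
    {g : ℝ → ℝ} {K t T : ℝ} (htT : t ≤ T)
    (hloc : ∀ a b, t ≤ a → a ≤ b → b ≤ T →
      ∫ ω, |μ[V b|m] ω - μ[V a|m] ω| ∂μ ≤ (b - a) * (K * (b - a) + (g b - g a))) :
    μ[V T|m] =ᵐ[μ] μ[V t|m] := by
  have hint : ∀ a b, Integrable (fun ω => |μ[V b|m] ω - μ[V a|m] ω|) μ := fun a b =>
    (integrable_condExp.sub integrable_condExp).abs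
  have hzero : ∫ ω, |μ[V T|m] ω - μ[V t|m] ω| ∂μ = 0 := by
    refine le_antisymm (le_zero_of_subadditive_of_le_mul htT ?_ hloc)
      (integral_nonneg fun ω => abs_nonneg _)
    intro a b c _ _ _ _
    rw [← integral_add (hint a b) (hint b c)]
    exact integral_mono (hint a c) ((hint a b).add (hint b c)) fun ω =>
      (abs_sub_le _ _ _).trans_eq (add_comm _ _)
  filter_upwards [(integral_eq_zero_iff_of_nonneg (fun ω => abs_nonneg _) (hint t T)).1 hzero]
    with ω hω
  exact sub_eq_zero.1 (abs_eq_zero.1 hω)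

lemma condExp_mul_ae_eq_condExp_mul_condExp [IsFiniteMeasure μ] {m m' : MeasurableSpace Ω}
    (hm : m ≤ m') (hm' : m' ≤ m0) {L F : Ω → ℝ} (hL : StronglyMeasurable[m'] L) {c : ℝ}
    (hLc : ∀ᵐ ω ∂μ, ‖L ω‖ ≤ c) (hF : Integrable F μ) :
    μ[L * F|m] =ᵐ[μ] μ[L * μ[F|m']|m] :=
  (condExp_condExp_of_le hm hm').symm.trans
    (condExp_congr_ae (condExp_stronglyMeasurable_mul_of_bound hm' hL hF c hLc))

namespace MeasureTheory.Martingale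

variable {ι : Type*} [Preorder ι] {𝒢 : Filtration ι m0} {Z M L : ι → Ω → ℝ}
  {i j : ι}

lemma integrable_sub_sub_mul_sub (hZ : Martingale Z 𝒢 μ)
    (hZM : Martingale (fun k ω => Z k ω * M k ω) 𝒢 μ) (hMi : StronglyMeasurable[𝒢 i] (M i))
    {c : ℝ} (hMc : ∀ᵐ ω ∂μ, ‖M i ω‖ ≤ c) :
    Integrable (fun ω => Z j ω - Z i ω - Z j ω * (M j ω - M i ω)) μ :=
  (((hZ.integrable j).sub (hZ.integrable i)).sub ((hZM.integrable j).sub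
    ((hZ.integrable j).bdd_mul (hMi.mono (𝒢.le i)).aestronglyMeasurable hMc))).congr
    (ae_of_all _ fun ω => by simp only [Pi.sub_apply]; ring)

lemma condExp_sub_sub_mul_sub_ae_eq_zero [IsFiniteMeasure μ] (hZ : Martingale Z 𝒢 μ)
    (hZM : Martingale (fun k ω => Z k ω * M k ω) 𝒢 μ) (hij : i ≤ j)
    (hMi : StronglyMeasurable[𝒢 i] (M i)) {c : ℝ} (hMc : ∀ᵐ ω ∂μ, ‖M i ω‖ ≤ c) :
    μ[fun ω => Z j ω - Z i ω - Z j ω * (M j ω - M i ω)|𝒢 i] =ᵐ[μ] 0 := by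
  have hMZ : Integrable (M i * Z j) μ :=
    (hZ.integrable j).bdd_mul (hMi.mono (𝒢.le i)).aestronglyMeasurable hMc
  have hsplit : (fun ω => Z j ω - Z i ω - Z j ω * (M j ω - M i ω))
      = (Z j - Z i) - ((fun ω => Z j ω * M j ω) - M i * Z j) := by
    funext ω; simp only [Pi.sub_apply, Pi.mul_apply]; ring
  rw [hsplit]
  filter_upwards [condExp_sub ((hZ.integrable j).sub (hZ.integrable i))
      ((hZM.integrable j).sub hMZ) (𝒢 i),
    condExp_sub (hZ.integrable j) (hZ.integrable i) (𝒢 i),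
    condExp_sub (hZM.integrable j) hMZ (𝒢 i),
    hZ.condExp_ae_eq hij, hZM.condExp_ae_eq hij,
    condExp_stronglyMeasurable_mul_of_bound (𝒢.le i) hMi (hZ.integrable j) c hMc,
    hZ.condExp_ae_eq (le_refl i)] with ω h h₁ h₂ hZj hZMj hMZj hZi
  simp only [Pi.sub_apply, Pi.mul_apply, Pi.zero_apply] at *
  rw [h, h₁, h₂, hMZj, hZj, hZMj, hZi]
  ring

lemma condExp_mul_sub_condExp_mul_ae_eq [IsFiniteMeasure μ] (hZ : Martingale Z 𝒢 μ)
    (hZM : Martingale (fun k ω => Z k ω * M k ω) 𝒢 μ) (hij : i ≤ j)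
    (hMi_meas : StronglyMeasurable[𝒢 i] (M i)) (hLi_meas : StronglyMeasurable[𝒢 i] (L i))
    (hLj_meas : StronglyMeasurable[𝒢 j] (L j)) {cM cL : ℝ} (hMi : ∀ᵐ ω ∂μ, ‖M i ω‖ ≤ cM)
    (hLi : ∀ᵐ ω ∂μ, ‖L i ω‖ ≤ cL) (hLj : ∀ᵐ ω ∂μ, ‖L j ω‖ ≤ cL)
    {m : MeasurableSpace Ω} (hm : m ≤ 𝒢 i) :
    μ[fun ω => Z j ω * L j ω|m] - μ[fun ω => Z i ω * L i ω|m]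
      =ᵐ[μ] μ[fun ω => Z j ω * (L j ω - L i ω + L i ω * (M j ω - M i ω))|m] := by
  set F := fun ω => Z j ω - Z i ω - Z j ω * (M j ω - M i ω)
  have hF : Integrable F μ := hZ.integrable_sub_sub_mul_sub hZM hMi_meas hMi
  have hLF : μ[fun ω => L i ω * F ω|m] =ᵐ[μ] 0 := by
    refine (condExp_mul_ae_eq_condExp_mul_condExp hm (𝒢.le i) hLi_meas hLi hF).trans ?_
    refine (condExp_congr_ae ?_).trans (condExp_zero (μ := μ) (m := m)).eventuallyEq
    filter_upwards [hZ.condExp_sub_sub_mul_sub_ae_eq_zero hZM hij hMi_meas hMi] with ω hω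
    exact mul_eq_zero_of_right _ hω
  have hZLi : Integrable (fun ω => Z i ω * L i ω) μ :=
    (hZ.integrable i).mul_bdd (hLi_meas.mono (𝒢.le i)).aestronglyMeasurable hLi
  have hZLj : Integrable (fun ω => Z j ω * L j ω) μ :=
    (hZ.integrable j).mul_bdd (hLj_meas.mono (𝒢.le j)).aestronglyMeasurable hLj
  have hsplit : (fun ω => Z j ω * (L j ω - L i ω + L i ω * (M j ω - M i ω)))
      = (fun ω => Z j ω * L j ω) - (fun ω => Z i ω * L i ω) - (fun ω => L i ω * F ω) := by
    funext ω; simp only [F, Pi.sub_apply]; ring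
  rw [hsplit]
  filter_upwards [condExp_sub (hZLj.sub hZLi)
      (hF.bdd_mul (hLi_meas.mono (𝒢.le i)).aestronglyMeasurable hLi) m,
    condExp_sub hZLj hZLi m, hLF] with ω h₁ h₂ h₃
  simp only [Pi.sub_apply, Pi.zero_apply] at *
  rw [h₁, h₂, h₃, sub_zero]

end MeasureTheory.Martingale

namespace MeasureTheory.IsStronglyProgressive

variable {𝒢 : Filtration ℝ m0} {lam : ℝ → Ω → ℝ}

lemma stronglyMeasurable_comp_min (hlam : IsStronglyProgressive 𝒢 lam) (u : ℝ) :
    StronglyMeasurable[(inferInstance : MeasurableSpace ℝ).prod (𝒢 u)]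
      (fun p : ℝ × Ω => lam (min p.1 u) p.2) := by
  have h : @Measurable (ℝ × Ω) (Iic u × Ω) ((inferInstance : MeasurableSpace ℝ).prod (𝒢 u))
      (Subtype.instMeasurableSpace.prod (𝒢 u))
      (fun p => (⟨min p.1 u, mem_Iic.2 (min_le_right _ _)⟩, p.2)) :=
    (measurable_fst.min measurable_const).subtype_mk.prodMk measurable_snd
  exact (hlam u).comp_measurable h

lemma intervalIntegrable (hlam : IsStronglyProgressive 𝒢 lam) {C : ℝ}
    (hC : ∀ s ω, ‖lam s ω‖ ≤ C) (ω : Ω) (a b : ℝ) :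
    IntervalIntegrable (fun s => lam s ω) volume a b := by
  have hpath : StronglyMeasurable (fun s => lam (min s (max a b)) ω) :=
    (hlam.stronglyMeasurable_comp_min (max a b)).comp_measurable
      (@measurable_prodMk_right _ _ _ (𝒢 (max a b)) ω)
  have heq : ∀ s ∈ uIoc a b, lam (min s (max a b)) ω = lam s ω := fun s hs => by
    rw [min_eq_left hs.2]
  exact (intervalIntegrable_const (c := C)).mono_fun'
    (hpath.aestronglyMeasurable.congr ((ae_restrict_iff' measurableSet_uIoc).2
      (Eventually.of_forall heq))) (Eventually.of_forall fun s => hC s ω)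

lemma stronglyMeasurable_intervalIntegral (hlam : IsStronglyProgressive 𝒢 lam) {a u : ℝ}
    (hau : a ≤ u) : StronglyMeasurable[𝒢 u] (fun ω => ∫ s in a..u, lam s ω) := by
  have heq : (fun ω => ∫ s in a..u, lam s ω) = fun ω => ∫ s in Ioc a u, lam (min s u) ω := by
    funext ω
    rw [intervalIntegral.integral_of_le hau]
    exact setIntegral_congr_fun measurableSet_Ioc fun s hs => by rw [min_eq_left hs.2]
  rw [heq]
  exact @StronglyMeasurable.integral_prod_left' ℝ Ω ℝ _ (𝒢 u) (volume.restrict (Ioc a u)) _ _ _ _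
    (hlam.stronglyMeasurable_comp_min u)

lemma condExp_exp_intervalIntegral_mul_ae_eq [IsFiniteMeasure μ]
    (hlam : IsStronglyProgressive 𝒢 lam) {C : ℝ} (hlam0 : ∀ s ω, 0 ≤ lam s ω)
    (hlamC : ∀ s ω, lam s ω ≤ C) {t : ℝ} (ht : 0 ≤ t) {Y : Ω → ℝ} (hY : Integrable Y μ) :
    μ[(fun ω => exp (∫ s in (0 : ℝ)..t, lam s ω)) * Y|𝒢 t]
      =ᵐ[μ] (fun ω => exp (∫ s in (0 : ℝ)..t, lam s ω)) * μ[Y|𝒢 t] :=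
  condExp_stronglyMeasurable_mul_of_bound (𝒢.le t)
    (continuous_exp.comp_stronglyMeasurable (hlam.stronglyMeasurable_intervalIntegral ht)) hY
    (exp (C * t)) <| ae_of_all _ fun ω => by
      rw [norm_of_nonneg (exp_pos _).le, exp_le_exp]
      simpa using intervalIntegral_le_mul_sub ht (hlam0 · ω) (hlamC · ω)

end MeasureTheory.IsStronglyProgressive

noncomputable section

def compensatedDefault (τ : Ω → ℝ) (lam : ℝ → Ω → ℝ) (t : ℝ) (ω : Ω) : ℝ :=
  {ω' | τ ω' ≤ t}.indicator (fun _ => 1) ω - ∫ s in (0 : ℝ)..min t (τ ω), lam s ω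

/-- The stochastic exponential of `-compensatedDefault τ lam`. -/
def survivalExp (τ : Ω → ℝ) (lam : ℝ → Ω → ℝ) (t : ℝ) (ω : Ω) : ℝ :=
  {ω' | t < τ ω'}.indicator (fun ω' => exp (∫ s in (0 : ℝ)..t, lam s ω')) ω

end

section Pointwise

variable {τ : Ω → ℝ} {lam : ℝ → Ω → ℝ} {C T u : ℝ} {ω : Ω}

lemma survivalExp_of_lt (h : u < τ ω) :
    survivalExp τ lam u ω = exp (∫ s in (0 : ℝ)..u, lam s ω) :=
  indicator_of_mem (s := {ω' | u < τ ω'}) h _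

lemma survivalExp_of_le (h : τ ω ≤ u) : survivalExp τ lam u ω = 0 :=
  indicator_of_notMem (s := {ω' | u < τ ω'}) (not_lt.2 h) _

lemma compensatedDefault_of_lt (h : u < τ ω) :
    compensatedDefault τ lam u ω = -∫ s in (0 : ℝ)..u, lam s ω := by
  simp [compensatedDefault, not_le.2 h, min_eq_left h.le]

lemma compensatedDefault_of_le (h : τ ω ≤ u) :
    compensatedDefault τ lam u ω = 1 - ∫ s in (0 : ℝ)..τ ω, lam s ω := by
  simp [compensatedDefault, h]

lemma abs_survivalExp_le (hlam0 : ∀ s, 0 ≤ lam s ω) (hlamC : ∀ s, lam s ω ≤ C)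
    (hu : 0 ≤ u) (huT : u ≤ T) : |survivalExp τ lam u ω| ≤ exp (C * T) := by
  have hC : 0 ≤ C := (hlam0 0).trans (hlamC 0)
  rcases lt_or_ge u (τ ω) with hτ | hτ
  · rw [survivalExp_of_lt hτ, abs_of_pos (exp_pos _), exp_le_exp]
    exact (intervalIntegral_le_mul_sub hu hlam0 hlamC).trans (by nlinarith)
  · rw [survivalExp_of_le hτ, abs_zero]
    exact (exp_pos _).le

lemma abs_compensatedDefault_le (hτ0 : 0 ≤ τ ω) (hlam0 : ∀ s, 0 ≤ lam s ω)
    (hlamC : ∀ s, lam s ω ≤ C) (hu : 0 ≤ u) (huT : u ≤ T) :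
    |compensatedDefault τ lam u ω| ≤ 1 + C * T := by
  have hC : 0 ≤ C := (hlam0 0).trans (hlamC 0)
  have hmin : 0 ≤ min u (τ ω) := le_min hu hτ0
  have h0 := intervalIntegral.integral_nonneg (μ := volume) hmin fun s _ => hlam0 s
  have hCT := intervalIntegral_le_mul_sub hmin hlam0 hlamC
  have hmT : min u (τ ω) ≤ T := (min_le_left _ _).trans huT
  have hind : {ω' | τ ω' ≤ u}.indicator (fun _ => (1 : ℝ)) ω ∈ Icc 0 1 := by
    by_cases h : τ ω ≤ u <;> simp [h]
  rw [compensatedDefault, abs_le]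
  constructor <;> nlinarith [hind.1, hind.2]

lemma abs_survivalExp_increment_le (hlam0 : ∀ s, 0 ≤ lam s ω) (hlamC : ∀ s, lam s ω ≤ C)
    (hint : ∀ a b, IntervalIntegrable (fun s => lam s ω) volume a b)
    {a b : ℝ} (ha : 0 ≤ a) (hab : a ≤ b) (hbT : b ≤ T) :
    |survivalExp τ lam b ω - survivalExp τ lam a ω
        + survivalExp τ lam a ω * (compensatedDefault τ lam b ω - compensatedDefault τ lam a ω)|
      ≤ exp (C * T) * (b - a) * (C ^ 2 * (b - a)
        + C * ({ω' | τ ω' ≤ b}.indicator 1 ω - {ω' | τ ω' ≤ a}.indicator 1 ω)) := by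
  have hC : 0 ≤ C := (hlam0 0).trans (hlamC 0)
  have hba : 0 ≤ b - a := sub_nonneg.2 hab
  have hadd : ∀ v, (∫ s in (0 : ℝ)..a, lam s ω) + ∫ s in a..v, lam s ω
      = ∫ s in (0 : ℝ)..v, lam s ω := fun v =>
    intervalIntegral.integral_add_adjacent_intervals (hint 0 a) (hint a v)
  have hexp : ∀ u, 0 ≤ u → u ≤ T → exp (∫ s in (0 : ℝ)..u, lam s ω) ≤ exp (C * T) :=
    fun u hu huT => exp_le_exp.2 <|
      (intervalIntegral_le_mul_sub hu hlam0 hlamC).trans (by nlinarith)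
  rcases lt_or_ge a (τ ω) with hτa | hτa
  · rcases lt_or_ge b (τ ω) with hτb | hτb
    · have hd0 := intervalIntegral.integral_nonneg (μ := volume) hab fun s _ => hlam0 s
      have hdC := intervalIntegral_le_mul_sub hab hlam0 hlamC
      have hxd := hexp b (ha.trans hab) hbT
      rw [← hadd b] at hxd
      rw [survivalExp_of_lt hτa, survivalExp_of_lt hτb, compensatedDefault_of_lt hτa,
        compensatedDefault_of_lt hτb, ← hadd b]
      simp only [indicator, mem_ofPred_eq, not_le.2 hτa, not_le.2 hτb, if_false, sub_self,
        mul_zero, add_zero]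
      calc _ = |exp ((∫ s in (0 : ℝ)..a, lam s ω) + ∫ s in a..b, lam s ω)
              - exp (∫ s in (0 : ℝ)..a, lam s ω)
              - exp (∫ s in (0 : ℝ)..a, lam s ω) * ∫ s in a..b, lam s ω| := by ring_nf
        _ ≤ (∫ s in a..b, lam s ω) ^ 2 * exp ((∫ s in (0 : ℝ)..a, lam s ω)
              + ∫ s in a..b, lam s ω) := abs_exp_add_sub_exp_sub_mul_le hd0
        _ ≤ (C * (b - a)) ^ 2 * exp (C * T) :=
            mul_le_mul (pow_le_pow_left₀ hd0 hdC 2) hxd (exp_pos _).le (sq_nonneg _)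
        _ = _ := by ring
    · have hd0 := intervalIntegral.integral_nonneg (μ := volume) hτa.le fun s _ => hlam0 s
      have hdC := intervalIntegral_le_mul_sub hτa.le hlam0 hlamC
      have hxa := hexp a ha (hab.trans hbT)
      rw [survivalExp_of_lt hτa, survivalExp_of_le hτb, compensatedDefault_of_lt hτa,
        compensatedDefault_of_le hτb, ← hadd (τ ω)]
      simp only [indicator, mem_ofPred_eq, not_le.2 hτa, hτb, if_false, if_true, Pi.one_apply]
      set x := ∫ s in (0 : ℝ)..a, lam s ω
      set d := ∫ s in a..τ ω, lam s ω
      rw [show 0 - exp x + exp x * (1 - (x + d) - -x) = -(exp x * d) by ring, abs_neg,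
        abs_of_nonneg (mul_nonneg (exp_pos x).le hd0)]
      have h1 : exp x * d ≤ exp (C * T) * (C * (b - a)) :=
        mul_le_mul hxa (hdC.trans (by nlinarith)) hd0 (exp_pos _).le
      nlinarith [mul_nonneg (mul_nonneg (exp_pos (C * T)).le hba) (mul_nonneg (sq_nonneg C) hba)]
  · rw [survivalExp_of_le hτa, survivalExp_of_le (hτa.trans hab)]
    simp only [indicator, mem_ofPred_eq, hτa, hτa.trans hab, if_true, Pi.one_apply, sub_self,
      zero_mul, add_zero, abs_zero, mul_zero]
    exact mul_nonneg (mul_nonneg (exp_pos _).le hba) (mul_nonneg (sq_nonneg _) hba)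

lemma mul_indicator_eq_survivalExp_mul_exp_neg (x : ℝ) :
    x * {ω' | u < τ ω'}.indicator (fun _ => (1 : ℝ)) ω
      = survivalExp τ lam u ω * (x * exp (-∫ s in (0 : ℝ)..u, lam s ω)) := by
  rcases lt_or_ge u (τ ω) with h | h
  · rw [survivalExp_of_lt h, indicator_of_mem (s := {ω' | u < τ ω'}) h, mul_left_comm,
      ← exp_add, add_neg_cancel, exp_zero, mul_one]
  · rw [survivalExp_of_le h, indicator_of_notMem (s := {ω' | u < τ ω'}) (not_lt.2 h)]
    ring

lemma indicator_mul_exp_mul_eq_survivalExp_mul (z : ℝ) :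
    {ω' | u < τ ω'}.indicator (fun _ => (1 : ℝ)) ω * (exp (∫ s in (0 : ℝ)..u, lam s ω) * z)
      = survivalExp τ lam u ω * z := by
  rcases lt_or_ge u (τ ω) with h | h
  · rw [survivalExp_of_lt h, indicator_of_mem (s := {ω' | u < τ ω'}) h, one_mul]
  · rw [survivalExp_of_le h, indicator_of_notMem (s := {ω' | u < τ ω'}) (not_lt.2 h)]
    ring

end Pointwise

section Survival

variable {𝒢 : Filtration ℝ m0} {τ : Ω → ℝ} {lam : ℝ → Ω → ℝ} {C : ℝ}

lemma measurableSet_le_of_isStoppingTime (hτ : IsStoppingTime 𝒢 (fun ω => (τ ω : WithTop ℝ)))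
    (u : ℝ) : MeasurableSet[𝒢 u] {ω | τ ω ≤ u} := by
  simpa using hτ u

lemma stronglyMeasurable_survivalExp (hτ : IsStoppingTime 𝒢 (fun ω => (τ ω : WithTop ℝ)))
    (hlam : IsStronglyProgressive 𝒢 lam) {u : ℝ} (hu : 0 ≤ u) :
    StronglyMeasurable[𝒢 u] (survivalExp τ lam u) := by
  have hs : MeasurableSet[𝒢 u] {ω | u < τ ω} := by
    simpa only [compl_ofPred, not_le] using (measurableSet_le_of_isStoppingTime hτ u).compl
  exact (continuous_exp.comp_stronglyMeasurable
    (hlam.stronglyMeasurable_intervalIntegral hu)).indicator hs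

variable [IsProbabilityMeasure μ] {cZ : ℝ}

lemma integral_abs_mul_survivalExp_increment_le (hτ : Measurable τ)
    (hlam0 : ∀ s ω, 0 ≤ lam s ω) (hlamC : ∀ s ω, lam s ω ≤ C)
    (hint : ∀ ω a b, IntervalIntegrable (fun s => lam s ω) volume a b)
    {z : Ω → ℝ} (hz : ∀ᵐ ω ∂μ, |z ω| ≤ cZ) {a b T : ℝ} (ha : 0 ≤ a) (hab : a ≤ b) (hbT : b ≤ T) :
    ∫ ω, |z ω * (survivalExp τ lam b ω - survivalExp τ lam a ω
        + survivalExp τ lam a ω * (compensatedDefault τ lam b ω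
          - compensatedDefault τ lam a ω))| ∂μ
      ≤ (b - a) * (cZ * exp (C * T) * C ^ 2 * (b - a)
        + (cZ * exp (C * T) * C * μ.real {ω | τ ω ≤ b}
          - cZ * exp (C * T) * C * μ.real {ω | τ ω ≤ a})) := by
  have hτle : ∀ u, MeasurableSet {ω | τ ω ≤ u} := fun u => measurableSet_le hτ measurable_const
  have hH : ∀ u, Integrable ({ω | τ ω ≤ u}.indicator 1) μ := fun u =>
    (integrable_const (1 : ℝ)).indicator (hτle u)
  have hHd : Integrable (fun ω => C * ({ω' | τ ω' ≤ b}.indicator 1 ω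
      - {ω' | τ ω' ≤ a}.indicator 1 ω)) μ := ((hH b).sub (hH a)).const_mul C
  have hbound : Integrable (fun ω => cZ * (exp (C * T) * (b - a) * (C ^ 2 * (b - a)
      + C * ({ω' | τ ω' ≤ b}.indicator 1 ω - {ω' | τ ω' ≤ a}.indicator 1 ω)))) μ :=
    (((integrable_const _).add hHd).const_mul _).const_mul _
  calc _ ≤ ∫ ω, cZ * (exp (C * T) * (b - a) * (C ^ 2 * (b - a)
          + C * ({ω' | τ ω' ≤ b}.indicator 1 ω - {ω' | τ ω' ≤ a}.indicator 1 ω))) ∂μ := by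
        refine integral_mono_of_nonneg (ae_of_all _ fun ω => abs_nonneg _) hbound ?_
        filter_upwards [hz] with ω hzω
        rw [abs_mul]
        exact mul_le_mul hzω (abs_survivalExp_increment_le (hlam0 · ω) (hlamC · ω) (hint ω)
          ha hab hbT) (abs_nonneg _) ((abs_nonneg _).trans hzω)
    _ = _ := by
        rw [integral_const_mul, integral_const_mul, integral_add (integrable_const _) hHd,
          integral_const, integral_const_mul, integral_sub (hH b) (hH a),
          integral_indicator_one (hτle b), integral_indicator_one (hτle a)]
        simp only [probReal_univ, one_smul]
        ring

lemma integral_abs_condExp_mul_survivalExp_sub_le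
    (hτ : IsStoppingTime 𝒢 (fun ω => (τ ω : WithTop ℝ))) (hτ0 : ∀ ω, 0 ≤ τ ω)
    (hlam0 : ∀ s ω, 0 ≤ lam s ω) (hlamC : ∀ s ω, lam s ω ≤ C)
    (hlam : IsStronglyProgressive 𝒢 lam) (hM : Martingale (compensatedDefault τ lam) 𝒢 μ)
    {Z : ℝ → Ω → ℝ} (hZ : Martingale Z 𝒢 μ) (hZc : ∀ u, ∀ᵐ ω ∂μ, |Z u ω| ≤ cZ)
    (hZM : Martingale (fun u ω => Z u ω * compensatedDefault τ lam u ω) 𝒢 μ)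
    {t a b T : ℝ} (ht : 0 ≤ t) (hta : t ≤ a) (hab : a ≤ b) (hbT : b ≤ T) :
    ∫ ω, |μ[fun ω => Z b ω * survivalExp τ lam b ω|𝒢 t] ω
        - μ[fun ω => Z a ω * survivalExp τ lam a ω|𝒢 t] ω| ∂μ
      ≤ (b - a) * (cZ * exp (C * T) * C ^ 2 * (b - a)
        + (cZ * exp (C * T) * C * μ.real {ω | τ ω ≤ b}
          - cZ * exp (C * T) * C * μ.real {ω | τ ω ≤ a})) := by
  have ha : 0 ≤ a := ht.trans hta
  have hL : ∀ u, 0 ≤ u → u ≤ T → ∀ᵐ ω ∂μ, ‖survivalExp τ lam u ω‖ ≤ exp (C * T) :=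
    fun u hu huT => ae_of_all _ fun ω => abs_survivalExp_le (hlam0 · ω) (hlamC · ω) hu huT
  have hdiff := hZ.condExp_mul_sub_condExp_mul_ae_eq hZM hab (hM.stronglyMeasurable a)
    (stronglyMeasurable_survivalExp hτ hlam ha)
    (stronglyMeasurable_survivalExp hτ hlam (ha.trans hab))
    (ae_of_all _ fun ω => abs_compensatedDefault_le (hτ0 ω) (hlam0 · ω) (hlamC · ω) ha
      (hab.trans hbT))
    (hL a ha (hab.trans hbT)) (hL b (ha.trans hab) hbT) (𝒢.mono hta)
  calc _ = ∫ ω, |μ[fun ω => Z b ω * (survivalExp τ lam b ω - survivalExp τ lam a ω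
          + survivalExp τ lam a ω * (compensatedDefault τ lam b ω
            - compensatedDefault τ lam a ω))|𝒢 t] ω| ∂μ :=
        integral_congr_ae (hdiff.mono fun ω h => congrArg abs h)
    _ ≤ _ := integral_abs_condExp_le _
    _ ≤ _ := integral_abs_mul_survivalExp_increment_le
        (measurable_of_Iic fun u => 𝒢.le u _ (measurableSet_le_of_isStoppingTime hτ u))
        hlam0 hlamC (hlam.intervalIntegrable fun s ω =>
          (norm_of_nonneg (hlam0 s ω)).trans_le (hlamC s ω)) (hZc b) ha hab hbT

theorem condExp_mul_survivalExp_ae_eq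
    (hτ : IsStoppingTime 𝒢 (fun ω => (τ ω : WithTop ℝ))) (hτ0 : ∀ ω, 0 ≤ τ ω)
    (hlam0 : ∀ s ω, 0 ≤ lam s ω) (hlamC : ∀ s ω, lam s ω ≤ C)
    (hlam : IsStronglyProgressive 𝒢 lam) (hM : Martingale (compensatedDefault τ lam) 𝒢 μ)
    {Z : ℝ → Ω → ℝ} (hZ : Martingale Z 𝒢 μ) (hZc : ∀ u, ∀ᵐ ω ∂μ, |Z u ω| ≤ cZ)
    (hZM : Martingale (fun u ω => Z u ω * compensatedDefault τ lam u ω) 𝒢 μ)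
    {t T : ℝ} (ht : 0 ≤ t) (htT : t ≤ T) :
    μ[fun ω => Z T ω * survivalExp τ lam T ω|𝒢 t]
      =ᵐ[μ] fun ω => Z t ω * survivalExp τ lam t ω := by
  have hLt := stronglyMeasurable_survivalExp hτ hlam ht
  have hZL : Integrable (fun ω => Z t ω * survivalExp τ lam t ω) μ :=
    (hZ.integrable t).mul_bdd (hLt.mono (𝒢.le t)).aestronglyMeasurable
      (ae_of_all _ fun ω => abs_survivalExp_le (hlam0 · ω) (hlamC · ω) ht le_rfl)
  refine (condExp_ae_eq_of_integral_abs_sub_le htT fun a b hta hab hbT =>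
    integral_abs_condExp_mul_survivalExp_sub_le hτ hτ0 hlam0 hlamC hlam hM hZ hZc hZM ht hta hab
      hbT).trans ?_
  exact (condExp_of_stronglyMeasurable (𝒢.le t) ((hZ.stronglyMeasurable t).mul hLt)
    hZL).eventuallyEq

theorem condExp_survivalExp_mul_ae_eq
    (hτ : IsStoppingTime 𝒢 (fun ω => (τ ω : WithTop ℝ))) (hτ0 : ∀ ω, 0 ≤ τ ω)
    (hlam0 : ∀ s ω, 0 ≤ lam s ω) (hlamC : ∀ s ω, lam s ω ≤ C)
    (hlam : IsStronglyProgressive 𝒢 lam) (hM : Martingale (compensatedDefault τ lam) 𝒢 μ)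
    {Y : Ω → ℝ} (hY : Integrable Y μ) (hYc : ∀ᵐ ω ∂μ, |Y ω| ≤ cZ)
    (hYM : Martingale (fun u ω => μ[Y|𝒢 u] ω * compensatedDefault τ lam u ω) 𝒢 μ)
    {t T : ℝ} (ht : 0 ≤ t) (htT : t ≤ T) :
    μ[survivalExp τ lam T * Y|𝒢 t] =ᵐ[μ] survivalExp τ lam t * μ[Y|𝒢 t] :=
  calc μ[survivalExp τ lam T * Y|𝒢 t]
      =ᵐ[μ] μ[survivalExp τ lam T * μ[Y|𝒢 T]|𝒢 t] :=
        condExp_mul_ae_eq_condExp_mul_condExp (𝒢.mono htT) (𝒢.le T)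
          (stronglyMeasurable_survivalExp hτ hlam (ht.trans htT))
          (ae_of_all _ fun ω => abs_survivalExp_le (hlam0 · ω) (hlamC · ω) (ht.trans htT) le_rfl)
          hY
    _ =ᵐ[μ] fun ω => μ[Y|𝒢 t] ω * survivalExp τ lam t ω :=
        (condExp_congr_ae (ae_of_all _ fun _ => mul_comm _ _)).trans
          (condExp_mul_survivalExp_ae_eq hτ hτ0 hlam0 hlamC hlam hM (martingale_condExp Y 𝒢 μ)
            (fun _ => ae_bdd_abs_condExp_of_ae_bdd_abs hYc) hYM ht htT)
    _ = survivalExp τ lam t * μ[Y|𝒢 t] := funext fun _ => mul_comm _ _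

end Survival

end

/-- Orthogonality pricing formula: if the martingale `Z_t = E[X e^{−∫₀^T λ} | 𝒢_t]` is
strongly orthogonal to the compensated default indicator `M` (i.e. `Z·M` is a martingale),
then `E[X 1_{τ>T} | 𝒢_t] = 1_{τ>t} E[X e^{−∫_t^T λ} | 𝒢_t]` for all `t ≤ T`. -/
theorem orthogonality_pricing {Ω : Type*} {m0 : MeasurableSpace Ω}
    (μ : Measure Ω) [IsProbabilityMeasure μ]
    (𝒢 : Filtration ℝ m0) (τ : Ω → ℝ) (hτ : IsStoppingTime 𝒢 (fun ω => (τ ω : WithTop ℝ))) (hτpos : ∀ ω, 0 ≤ τ ω)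
    (lam : ℝ → Ω → ℝ) (hlam_nonneg : ∀ s ω, 0 ≤ lam s ω)
    (Clam : ℝ) (hlam_bdd : ∀ s ω, lam s ω ≤ Clam) (hlam_prog : ProgMeasurable 𝒢 lam)
    (hM : Martingale
      (fun t ω => Set.indicator {ω' | τ ω' ≤ t} (fun _ => (1 : ℝ)) ω
        - ∫ s in (0:ℝ)..(min t (τ ω)), lam s ω) 𝒢 μ)
    (T : ℝ) (hT : 0 ≤ T)
    (X : Ω → ℝ) (CX : ℝ) (hXbdd : ∀ ω, |X ω| ≤ CX) (hXmeas : Measurable X)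
    (horth : Martingale
      (fun t ω =>
        (μ[fun ω' => X ω' * Real.exp (-∫ s in (0:ℝ)..T, lam s ω') | 𝒢 t]) ω
          * (Set.indicator {ω' | τ ω' ≤ t} (fun _ => (1 : ℝ)) ω
              - ∫ s in (0:ℝ)..(min t (τ ω)), lam s ω)) 𝒢 μ) :
    ∀ t : ℝ, 0 ≤ t → t ≤ T →
      (μ[fun ω => X ω * Set.indicator {ω' | T < τ ω'} (fun _ => (1 : ℝ)) ω | 𝒢 t])
        =ᵐ[μ] fun ω =>
          Set.indicator {ω' | t < τ ω'} (fun _ => (1 : ℝ)) ω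
            * (μ[fun ω' => X ω' * Real.exp (-∫ s in t..T, lam s ω') | 𝒢 t]) ω := by
  intro t ht htT
  set Y := fun ω => X ω * exp (-∫ s in (0 : ℝ)..T, lam s ω)
  have hYc : ∀ ω, |Y ω| ≤ CX := fun ω => by
    rw [abs_mul, abs_of_pos (exp_pos _)]
    refine (mul_le_of_le_one_right (abs_nonneg _) (exp_le_one_iff.2 ?_)).trans (hXbdd ω)
    exact neg_nonpos.2 (intervalIntegral.integral_nonneg hT fun s _ => hlam_nonneg s ω)
  have hYint : Integrable Y μ := Integrable.of_bound (hXmeas.aestronglyMeasurable.mul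
    (continuous_exp.comp_aestronglyMeasurable
      ((hlam_prog.stronglyMeasurable_intervalIntegral hT).mono (𝒢.le T)).aestronglyMeasurable.neg))
    CX (ae_of_all _ hYc)
  have hint : ∀ ω a b, IntervalIntegrable (fun s => lam s ω) volume a b :=
    hlam_prog.intervalIntegrable fun s ω =>
      (norm_of_nonneg (hlam_nonneg s ω)).trans_le (hlam_bdd s ω)
  have hRHS : (fun ω => X ω * exp (-∫ s in t..T, lam s ω))
      = (fun ω => exp (∫ s in (0 : ℝ)..t, lam s ω)) * Y := funext fun ω => by
    rw [exp_neg_intervalIntegral_eq (hint ω 0 t) (hint ω t T), Pi.mul_apply, mul_left_comm]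
  have hLHS : (fun ω => X ω * {ω' | T < τ ω'}.indicator (fun _ => (1 : ℝ)) ω)
      = survivalExp τ lam T * Y := funext fun ω => mul_indicator_eq_survivalExp_mul_exp_neg (X ω)
  rw [hLHS, hRHS]
  filter_upwards [condExp_survivalExp_mul_ae_eq hτ hτpos hlam_nonneg hlam_bdd hlam_prog hM hYint
      (ae_of_all _ hYc) horth ht htT,
    hlam_prog.condExp_exp_intervalIntegral_mul_ae_eq hlam_nonneg hlam_bdd ht hYint] with ω h₁ h₂
  rw [h₁, h₂, Pi.mul_apply, Pi.mul_apply, indicator_mul_exp_mul_eq_survivalExp_mul]
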